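/- Let U and V be subspaces of a finite-dimensional real inner product space whose dimensions differ, dim U ≠ dim V. Then the gap between them is maximal: d(U, V) = ‖P_U − P_V‖ = 1. -/

import Mathlib

/-- The orthogonal projection onto a subspace, as a continuous linear map on the
ambient space. -/
noncomputable def orthProjCLM {E : Type*} [NormedAddCommGroup E] [InnerProductSpace ℝ E]
    [FiniteDimensional ℝ E] (U : Submodule ℝ E) : E →L[ℝ] E :=
  U.subtypeL.comp (U.orthogonalProjection)

/-- The gap metric between subspaces: the operator norm of the difference of the
orthogonal projections. -/
noncomputable def gap {E : Type*} [NormedAddCommGroup E] [InnerProductSpace ℝ E]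
    [FiniteDimensional ℝ E] (U V : Submodule ℝ E) : ℝ :=
  ‖orthProjCLM U - orthProjCLM V‖

lemma orthProj_apply_norm_le {E : Type*} [NormedAddCommGroup E] [InnerProductSpace ℝ E]
    [FiniteDimensional ℝ E] (U : Submodule ℝ E) (x : E) :
    ‖(Submodule.orthogonalProjection U x : E)‖ ≤ ‖x‖ := by
  have := (Submodule.orthogonalProjection U).le_opNorm x
  calc ‖(Submodule.orthogonalProjection U x : E)‖ = ‖Submodule.orthogonalProjection U x‖ := rfl
    _ ≤ ‖Submodule.orthogonalProjection U‖ * ‖x‖ := this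
    _ ≤ 1 * ‖x‖ := by
        exact mul_le_mul_of_nonneg_right (Submodule.orthogonalProjection_norm_le U) (norm_nonneg x)
    _ = ‖x‖ := one_mul _

lemma gap_le_one {E : Type*} [NormedAddCommGroup E] [InnerProductSpace ℝ E]
    [FiniteDimensional ℝ E] (U V : Submodule ℝ E) : gap U V ≤ 1 := by
  refine ContinuousLinearMap.opNorm_le_bound _ zero_le_one fun x => ?_
  rw [one_mul]
  set a : E := (Submodule.orthogonalProjection U (Submodule.orthogonalProjection Vᗮ x) : E) with ha
  set b : E := (Submodule.orthogonalProjection Uᗮ (Submodule.orthogonalProjection V x) : E) with hb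
  have hx : (Submodule.orthogonalProjection V x : E) + (Submodule.orthogonalProjection Vᗮ x : E) = x :=
    Submodule.starProjection_add_starProjection_orthogonal (K := V) x
  have hdecomp : (orthProjCLM U - orthProjCLM V) x = a - b := by
    have h1 : (Submodule.orthogonalProjection U (Submodule.orthogonalProjection V x) : E) + b
        = (Submodule.orthogonalProjection V x : E) :=
      Submodule.starProjection_add_starProjection_orthogonal (K := U) _
    have h2 : (Submodule.orthogonalProjection U x : E)
        = (Submodule.orthogonalProjection U (Submodule.orthogonalProjection V x) : E) + a := by
      rw [← Submodule.coe_add, ← map_add]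
      congr 1
      exact congrArg _ hx.symm
    simp only [orthProjCLM, ContinuousLinearMap.sub_apply, ContinuousLinearMap.coe_comp',
      Function.comp_apply, Submodule.coe_subtypeL', Submodule.coe_subtype]
    rw [h2]
    nth_rewrite 2 [← h1]
    abel
  have hinner : inner ℝ a (-b) = (0:ℝ) := by
    rw [inner_neg_right]
    have : inner ℝ a b = (0:ℝ) := by
      rw [real_inner_comm]
      exact (Submodule.mem_orthogonal Uᗮ a).mp (Submodule.le_orthogonal_orthogonal U
        (Submodule.orthogonalProjection U (Submodule.orthogonalProjection Vᗮ x)).2) b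
        (Submodule.orthogonalProjection Uᗮ (Submodule.orthogonalProjection V x)).2
    rw [this, neg_zero]
  have hpyth : ‖a - b‖ ^ 2 = ‖a‖ ^ 2 + ‖b‖ ^ 2 := by
    have := norm_add_sq_eq_norm_sq_add_norm_sq_of_inner_eq_zero a (-b) hinner
    simpa [sub_eq_add_neg, sq] using this
  have hna : ‖a‖ ≤ ‖(Submodule.orthogonalProjection Vᗮ x : E)‖ := orthProj_apply_norm_le U _
  have hnb : ‖b‖ ≤ ‖(Submodule.orthogonalProjection V x : E)‖ := orthProj_apply_norm_le Uᗮ _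
  have hxsq : ‖x‖ ^ 2 = ‖(Submodule.orthogonalProjection V x : E)‖ ^ 2
      + ‖(Submodule.orthogonalProjection Vᗮ x : E)‖ ^ 2 := Submodule.norm_sq_eq_add_norm_sq_projection x V
  have : ‖a - b‖ ^ 2 ≤ ‖x‖ ^ 2 := by
    rw [hpyth, hxsq]
    have h1 : ‖a‖ ^ 2 ≤ ‖(Submodule.orthogonalProjection Vᗮ x : E)‖ ^ 2 :=
      pow_le_pow_left₀ (norm_nonneg a) hna 2
    have h2 : ‖b‖ ^ 2 ≤ ‖(Submodule.orthogonalProjection V x : E)‖ ^ 2 :=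
      pow_le_pow_left₀ (norm_nonneg b) hnb 2
    linarith
  rw [hdecomp]
  nlinarith [norm_nonneg (a - b), norm_nonneg x]

lemma gap_ge_one_of_lt {E : Type*} [NormedAddCommGroup E] [InnerProductSpace ℝ E]
    [FiniteDimensional ℝ E] (U V : Submodule ℝ E)
    (h : Module.finrank ℝ V < Module.finrank ℝ U) : 1 ≤ gap U V := by
  have hnd : ¬ Disjoint U Vᗮ := by
    intro hd
    have := Submodule.finrank_add_finrank_le_of_disjoint hd
    have hV := Submodule.finrank_add_finrank_orthogonal (𝕜 := ℝ) (E := E) V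
    omega
  rw [Submodule.disjoint_def] at hnd
  push_neg at hnd
  obtain ⟨x, hxU, hxV, hx0⟩ := hnd
  have hxn : ‖x‖ ≠ 0 := norm_ne_zero_iff.mpr hx0
  have hPU : (Submodule.orthogonalProjection U x : E) = x := by
    exact Submodule.starProjection_eq_self_iff.mpr hxU
  have hPV : (Submodule.orthogonalProjection V x : E) = 0 := by
    rw [Submodule.orthogonalProjectionOnto_apply_of_mem_orthogonal hxV,
      Submodule.coe_zero]
  have happ : (orthProjCLM U - orthProjCLM V) x = x := by
    simp only [orthProjCLM, ContinuousLinearMap.sub_apply, ContinuousLinearMap.coe_comp',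
      Function.comp_apply, Submodule.coe_subtypeL', Submodule.coe_subtype]
    rw [hPU, hPV, sub_zero]
  have := (orthProjCLM U - orthProjCLM V).le_opNorm x
  rw [happ] at this
  have hpos : 0 < ‖x‖ := lt_of_le_of_ne (norm_nonneg x) (Ne.symm hxn)
  exact le_of_mul_le_mul_right (by rw [one_mul]; exact this) hpos
  
theorem gap_eq_one_of_finrank_ne {E : Type*} [NormedAddCommGroup E]
    [InnerProductSpace ℝ E] [FiniteDimensional ℝ E] (U V : Submodule ℝ E)
    (h : Module.finrank ℝ U ≠ Module.finrank ℝ V) :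
    gap U V = 1 := by
  have hsymm : gap U V = gap V U := by
    unfold gap
    rw [← norm_neg, neg_sub]
  have hge : 1 ≤ gap U V := by
    rcases lt_or_gt_of_ne h with hlt | hgt
    · rw [hsymm]; exact gap_ge_one_of_lt V U hlt
    · exact gap_ge_one_of_lt U V hgt
  exact le_antisymm (gap_le_one U V) hge
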